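/- Let P be a module over a commutative unital 𝕜-algebra A, k ≥ 1, l ≥ 0. For ∇ ∈ D_k(Diff_l⁺(P)), define S(∇) : A^{k−1} → Hom_𝕜(A,P) by S(∇)(a₁,…,a_{k−1})(a) = (∇(a₁,…,a_{k−1},a))(1). Then: (1) each value S(∇)(a₁,…,a_{k−1}) is a differential operator A → P of order ≤ l + 1, and S(∇) is a skew-symmetric (k−1)-multiderivation with values in Diff_{l+1}⁺(P), so that S maps D_k(Diff_l⁺(P)) into D_{k−1}(Diff_{l+1}⁺(P)); (2) the map S : D_k(Diff_l⁺(P)) → D_{k−1}(Diff_{l+1}⁺(P)) is a differential operator of order ≤ 1 over A; (3) S ∘ S = 0, i.e., S(S(∇)) = 0 for every ∇ ∈ D_k(Diff_l⁺(P)) with k ≥ 2 (this S is the Diff-Spencer operator). -/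

import Mathlib

/-- `dop A a f = δ_a(f)`, where `δ_a(f)(p) = f (a • p) - a • f p`. -/
def dop (A : Type*) [CommRing A] {M N : Type*} [AddCommGroup M] [Module A M]
    [AddCommGroup N] [Module A N] (a : A) (f : M → N) : M → N :=
  fun p => f (a • p) - a • f p

/-- `IsDiffOp A k f` : `f` is a differential operator of order at most `k` over `A`. -/
def IsDiffOp (A : Type*) [CommRing A] {M N : Type*} [AddCommGroup M] [Module A M]
    [AddCommGroup N] [Module A N] : ℕ → (M → N) → Prop
  | 0, f => ∀ a : A, dop A a f = 0
  | k + 1, f => ∀ a : A, IsDiffOp A k (dop A a f)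

/-- The `𝕜`-linear maps `A → P`, regarded as an `A`-module via the action
`(a • θ) b = θ (a * b)`:  this is the carrier of the modules `Diff_l⁺(P)` with the
`+`-module structure. -/
def PlusHom (𝕜 : Type*) [Field 𝕜] (A : Type*) [CommRing A] [Algebra 𝕜 A]
    (P : Type*) [AddCommGroup P] [Module 𝕜 P] : Type _ :=
  A →ₗ[𝕜] P

namespace PlusHom

variable {𝕜 : Type*} [Field 𝕜] {A : Type*} [CommRing A] [Algebra 𝕜 A]
variable {P : Type*} [AddCommGroup P] [Module 𝕜 P]

instance : FunLike (PlusHom 𝕜 A P) A P :=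
  inferInstanceAs (FunLike (A →ₗ[𝕜] P) A P)

instance : AddCommGroup (PlusHom 𝕜 A P) :=
  inferInstanceAs (AddCommGroup (A →ₗ[𝕜] P))

instance : Module 𝕜 (PlusHom 𝕜 A P) :=
  inferInstanceAs (Module 𝕜 (A →ₗ[𝕜] P))

instance : LinearMapClass (PlusHom 𝕜 A P) 𝕜 A P :=
  inferInstanceAs (LinearMapClass (A →ₗ[𝕜] P) 𝕜 A P)

/-- Regard a `𝕜`-linear map as an element of `PlusHom`. -/
def of (θ : A →ₗ[𝕜] P) : PlusHom 𝕜 A P := θ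

/-- The underlying `𝕜`-linear map. -/
def toLin (θ : PlusHom 𝕜 A P) : A →ₗ[𝕜] P := θ

instance : SMul A (PlusHom 𝕜 A P) :=
  ⟨fun a θ => of (toLin θ ∘ₗ LinearMap.mulLeft 𝕜 a)⟩

lemma ext {θ η : PlusHom 𝕜 A P} (h : ∀ b : A, θ b = η b) : θ = η :=
  LinearMap.ext h

@[simp] lemma smul_apply (a : A) (θ : PlusHom 𝕜 A P) (b : A) :
    (a • θ) b = θ (a * b) := rfl

@[simp] lemma add_apply (θ η : PlusHom 𝕜 A P) (b : A) : (θ + η) b = θ b + η b := rfl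

@[simp] lemma ksmul_apply (c : 𝕜) (θ : PlusHom 𝕜 A P) (b : A) :
    (c • θ) b = c • θ b := rfl

@[simp] lemma zero_apply (b : A) : (0 : PlusHom 𝕜 A P) b = 0 := rfl

instance : Module A (PlusHom 𝕜 A P) where
  smul := (· • ·)
  one_smul θ := ext fun b => congrArg θ (one_mul b)
  mul_smul a a' θ := ext fun b => congrArg θ (show (a * a') * b = a' * (a * b) by ring)
  smul_zero a := ext fun _ => rfl
  smul_add a θ η := ext fun _ => rfl
  add_smul a a' θ := ext fun b => by
    show θ ((a + a') * b) = θ (a * b) + θ (a' * b)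
    rw [add_mul]; exact map_add θ _ _
  zero_smul θ := ext fun b => by
    show θ (0 * b) = 0
    rw [zero_mul]; exact map_zero θ

instance : IsScalarTower 𝕜 A (PlusHom 𝕜 A P) :=
  ⟨fun c a θ => ext fun b => by
    show θ ((c • a) * b) = c • θ (a * b)
    rw [smul_mul_assoc, map_smul]⟩

end PlusHom

/-- Skew-symmetric `k`-multiderivations of `A` with values in a module `Q` over `𝕜` and
over `A`:  `𝕜`-multilinear, vanishing whenever two arguments coincide, and satisfying
the Leibniz rule in each argument. -/
def IsSkewMultiDeriv (𝕜 : Type*) [Field 𝕜] (A : Type*) [CommRing A] [Algebra 𝕜 A]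
    {Q : Type*} [AddCommGroup Q] [Module 𝕜 Q] [Module A Q] (k : ℕ)
    (Φ : (Fin k → A) → Q) : Prop :=
  (∀ (v : Fin k → A) (i : Fin k) (x y : A),
      Φ (Function.update v i (x + y)) = Φ (Function.update v i x) + Φ (Function.update v i y)) ∧
  (∀ (v : Fin k → A) (i : Fin k) (c : 𝕜) (x : A),
      Φ (Function.update v i (c • x)) = c • Φ (Function.update v i x)) ∧
  (∀ (v : Fin k → A) (i j : Fin k), i ≠ j → v i = v j → Φ v = 0) ∧
  (∀ (v : Fin k → A) (i : Fin k) (x y : A),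
      Φ (Function.update v i (x * y)) =
        x • Φ (Function.update v i y) + y • Φ (Function.update v i x))

section
variable (𝕜 : Type*) [Field 𝕜] (A : Type*) [CommRing A] [Algebra 𝕜 A]
variable {P : Type*} [AddCommGroup P] [Module 𝕜 P]

/-- The Diff-Spencer operator:  `S(Φ)(a₁,…,a_k)(a) = (Φ(a₁,…,a_k,a))(1)`. -/
def Sfun {k : ℕ} (Φ : (Fin (k + 1) → A) → PlusHom 𝕜 A P)
    (h : IsSkewMultiDeriv 𝕜 A (k + 1) Φ) : (Fin k → A) → PlusHom 𝕜 A P :=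
  fun v => PlusHom.of
    { toFun := fun a => Φ (Fin.snoc v a) 1
      map_add' := fun x y => by
        have h1 := h.1 (Fin.snoc v x) (Fin.last k) x y
        rw [Fin.update_snoc_last, Fin.update_snoc_last, Fin.update_snoc_last] at h1
        show Φ (Fin.snoc v (x + y)) 1 = Φ (Fin.snoc v x) 1 + Φ (Fin.snoc v y) 1
        rw [h1]; rfl
      map_smul' := fun c x => by
        have h1 := h.2.1 (Fin.snoc v x) (Fin.last k) c x
        rw [Fin.update_snoc_last, Fin.update_snoc_last] at h1
        show Φ (Fin.snoc v (c • x)) 1 = c • Φ (Fin.snoc v x) 1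
        rw [h1]; rfl }

end

section DiffOpHelpers

variable {A : Type*} [CommRing A] {M N : Type*} [AddCommGroup M] [Module A M]
  [AddCommGroup N] [Module A N]

lemma dop_apply' (a : A) (f : M → N) (p : M) : dop A a f p = f (a • p) - a • f p := rfl

lemma dop_zero' (a : A) : dop A a (0 : M → N) = 0 := by
  funext p; simp [dop]

lemma isDiffOp_zero : ∀ l : ℕ, IsDiffOp A l (0 : M → N)
  | 0 => fun a => dop_zero' a
  | l + 1 => fun a => by rw [dop_zero']; exact isDiffOp_zero l

lemma isDiffOp_congr {l : ℕ} {f g : M → N} (h : ∀ p, f p = g p) (hf : IsDiffOp A l f) :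
    IsDiffOp A l g := by
  rwa [show g = f from funext fun p => (h p).symm]

lemma dop_add_pt (a : A) (f g : M → N) :
    dop A a (fun p => f p + g p) = fun p => dop A a f p + dop A a g p := by
  funext p; simp only [dop, smul_add]; abel

lemma isDiffOp_add {l : ℕ} {f g : M → N} (hf : IsDiffOp A l f) (hg : IsDiffOp A l g) :
    IsDiffOp A l (fun p => f p + g p) := by
  induction l generalizing f g with
  | zero =>
    intro a
    rw [dop_add_pt, hf a, hg a]
    funext p; simp
  | succ m ih =>
    intro a
    rw [dop_add_pt]
    exact ih (hf a) (hg a)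

lemma dop_mulLeft {P : Type*} [AddCommGroup P] [Module A P] (a c : A) (f : A → P) :
    dop A c (fun b => f (a * b)) = fun b => dop A c f (a * b) := by
  funext b
  show f (a * (c • b)) - c • f (a * b) = f (c • (a * b)) - c • f (a * b)
  rw [smul_eq_mul, smul_eq_mul, mul_left_comm]

lemma isDiffOp_mulLeft {P : Type*} [AddCommGroup P] [Module A P] {l : ℕ} {f : A → P}
    (hf : IsDiffOp A l f) (a : A) : IsDiffOp A l (fun b => f (a * b)) := by
  induction l generalizing f with
  | zero =>
    intro c
    rw [dop_mulLeft, hf c]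
    funext b; simp
  | succ m ih =>
    intro c
    rw [dop_mulLeft]
    exact ih (hf c)

lemma key_dop {P : Type*} [AddCommGroup P] [Module A P] (F : A → A → P)
    (hLeib : ∀ b c x : A, F (b * c) x = F c (b * x) + F b (c * x)) (a : A) :
    dop A a (fun b => F b 1) = fun b => F a b + dop A a (F b) 1 := by
  funext b
  show F (a • b) 1 - a • F b 1 = F a b + (F b (a • (1 : A)) - a • F b 1)
  rw [smul_eq_mul, smul_eq_mul, hLeib a b 1, mul_one, mul_one]
  abel

lemma key_lemma {P : Type*} [AddCommGroup P] [Module A P] (l : ℕ)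
    (F : A → A → P)
    (hLeib : ∀ b c x : A, F (b * c) x = F c (b * x) + F b (c * x))
    (hF : ∀ b, IsDiffOp A l (F b)) :
    IsDiffOp A (l + 1) (fun b => F b 1) := by
  induction l generalizing F with
  | zero =>
    intro a
    rw [key_dop F hLeib a]
    refine isDiffOp_congr (f := F a) (fun b => ?_) (hF a)
    rw [hF b a]
    simp
  | succ m ih =>
    intro a
    rw [key_dop F hLeib a]
    refine isDiffOp_add (hF a) (ih (fun b => dop A a (F b)) ?_ (fun b => hF b a))
    intro b c x
    show F (b * c) (a • x) - a • F (b * c) x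
        = (F c (a • (b * x)) - a • F c (b * x)) + (F b (a • (c * x)) - a • F b (c * x))
    rw [smul_eq_mul, smul_eq_mul, smul_eq_mul, hLeib b c (a * x), hLeib b c x,
      mul_left_comm b a x, mul_left_comm c a x, smul_add]
    abel

end DiffOpHelpers

section PlusHomHelpers

variable {𝕜 : Type*} [Field 𝕜] {A : Type*} [CommRing A] [Algebra 𝕜 A]
variable {P : Type*} [AddCommGroup P] [Module 𝕜 P]

lemma PlusHom.sub_apply (θ η : PlusHom 𝕜 A P) (b : A) : (θ - η) b = θ b - η b := rfl

variable {Q : Type*} [AddCommGroup Q] [Module 𝕜 Q] [Module A Q]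
variable {k : ℕ} {Φ : (Fin (k + 1) → A) → Q}

lemma snoc_mul (h : IsSkewMultiDeriv 𝕜 A (k + 1) Φ) (v : Fin k → A) (x y : A) :
    Φ (Fin.snoc v (x * y)) = x • Φ (Fin.snoc v y) + y • Φ (Fin.snoc v x) := by
  have := h.2.2.2 (Fin.snoc v x) (Fin.last k) x y
  rwa [Fin.update_snoc_last, Fin.update_snoc_last, Fin.update_snoc_last] at this

lemma snoc_add' (h : IsSkewMultiDeriv 𝕜 A (k + 1) Φ) (v : Fin k → A) (x y : A) :
    Φ (Fin.snoc v (x + y)) = Φ (Fin.snoc v x) + Φ (Fin.snoc v y) := by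
  have := h.1 (Fin.snoc v x) (Fin.last k) x y
  rwa [Fin.update_snoc_last, Fin.update_snoc_last, Fin.update_snoc_last] at this

lemma snoc_one (h : IsSkewMultiDeriv 𝕜 A (k + 1) Φ) (v : Fin k → A) :
    Φ (Fin.snoc v 1) = 0 := by
  have h1 := snoc_mul h v 1 1
  simp only [one_mul, one_smul] at h1
  exact right_eq_add.mp h1

lemma snoc_alt (h : IsSkewMultiDeriv 𝕜 A (k + 1) Φ) (v : Fin k → A) (i : Fin k) (x : A) :
    Φ (Fin.snoc (Function.update v i x) x) = 0 := by
  refine h.2.2.1 _ i.castSucc (Fin.last k) (Fin.ne_last_of_lt (Fin.castSucc_lt_last i)) ?_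
  rw [Fin.snoc_castSucc, Function.update_self, Fin.snoc_last]

lemma snoc_antisymm (h : IsSkewMultiDeriv 𝕜 A (k + 1) Φ) (v : Fin k → A) (i : Fin k)
    (x y : A) :
    Φ (Fin.snoc (Function.update v i y) x) + Φ (Fin.snoc (Function.update v i x) y) = 0 := by
  have h0 : Φ (Fin.snoc (Function.update v i (x + y)) (x + y)) = 0 := snoc_alt h v i (x + y)
  rw [snoc_add' h (Function.update v i (x + y)) x y] at h0
  have hx : Φ (Fin.snoc (Function.update v i (x + y)) x)
      = Φ (Fin.snoc (Function.update v i x) x) + Φ (Fin.snoc (Function.update v i y) x) := by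
    have := h.1 (Fin.snoc v x) i.castSucc x y
    rw [← Fin.snoc_update, ← Fin.snoc_update, ← Fin.snoc_update] at this
    exact this
  have hy : Φ (Fin.snoc (Function.update v i (x + y)) y)
      = Φ (Fin.snoc (Function.update v i x) y) + Φ (Fin.snoc (Function.update v i y) y) := by
    have := h.1 (Fin.snoc v y) i.castSucc x y
    rw [← Fin.snoc_update, ← Fin.snoc_update, ← Fin.snoc_update] at this
    exact this
  rw [hx, hy, snoc_alt h v i x, snoc_alt h v i y] at h0
  rw [← h0]; abel

end PlusHomHelpers

section SfunHelpers

variable {𝕜 : Type*} [Field 𝕜] {A : Type*} [CommRing A] [Algebra 𝕜 A]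
variable {P : Type*} [AddCommGroup P] [Module 𝕜 P]

lemma Sfun_apply {k : ℕ} (Φ : (Fin (k + 1) → A) → PlusHom 𝕜 A P)
    (h : IsSkewMultiDeriv 𝕜 A (k + 1) Φ) (v : Fin k → A) (b : A) :
    Sfun 𝕜 A Φ h v b = Φ (Fin.snoc v b) 1 := rfl

end SfunHelpers

/-- here the `k` of the informal statement is `k + 1 ≥ 1`, and
`l ≥ 0`.  For `Φ ∈ D_{k+1}(Diff_l⁺(P))` define
`S(Φ)(a₁,…,a_k)(a) = (Φ(a₁,…,a_k,a))(1)`.  Then: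
(1) `S(Φ)(a₁,…,a_k)` is a (`𝕜`-linear) differential operator of order `≤ l + 1` and
`S(Φ)` is a skew-symmetric `k`-multiderivation with values in `Diff_{l+1}⁺(P)`, so `S`
maps `D_{k+1}(Diff_l⁺(P))` into `D_k(Diff_{l+1}⁺(P))`;
(2) `S` is a differential operator of order `≤ 1` over `A` between these `A`-modules
(with the pointwise `+`-actions `(a • Φ) v = a • (Φ v)`, `(a • θ)(b) = θ(a b)`):
the submodules are stable under the action and `δ_b(δ_a(S)) = 0` for all `a, b ∈ A`;
(3) `S ∘ S = 0`. -/
theorem spencer_operator_properties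
    (𝕜 : Type*) [Field 𝕜] (A : Type*) [CommRing A] [Algebra 𝕜 A]
    (P : Type*) [AddCommGroup P] [Module 𝕜 P] [Module A P] [IsScalarTower 𝕜 A P]
    (k l : ℕ) :
    -- (1)
    (∀ (Φ : (Fin (k + 1) → A) → PlusHom 𝕜 A P) (h : IsSkewMultiDeriv 𝕜 A (k + 1) Φ),
      (∀ v, IsDiffOp A l ⇑(Φ v)) →
        (∀ v, IsDiffOp A (l + 1) ⇑(Sfun 𝕜 A Φ h v)) ∧
          IsSkewMultiDeriv 𝕜 A k (Sfun 𝕜 A Φ h)) ∧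
    -- (2): stability of D_{k+1}(Diff_l⁺(P)) under the A-action …
    (∀ (a : A) (Φ : (Fin (k + 1) → A) → PlusHom 𝕜 A P),
      IsSkewMultiDeriv 𝕜 A (k + 1) Φ → IsSkewMultiDeriv 𝕜 A (k + 1) (a • Φ)) ∧
    (∀ (a : A) (Φ : (Fin (k + 1) → A) → PlusHom 𝕜 A P),
      (∀ v, IsDiffOp A l ⇑(Φ v)) → ∀ v, IsDiffOp A l ⇑((a • Φ) v)) ∧
    -- … and the identity `δ_b(δ_a(S)) = 0`, evaluated on `Φ` :
    (∀ (a b : A) (Φ : (Fin (k + 1) → A) → PlusHom 𝕜 A P)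
        (h : IsSkewMultiDeriv 𝕜 A (k + 1) Φ)
        (ha : IsSkewMultiDeriv 𝕜 A (k + 1) (a • Φ))
        (hb : IsSkewMultiDeriv 𝕜 A (k + 1) (b • Φ))
        (hab : IsSkewMultiDeriv 𝕜 A (k + 1) (a • b • Φ)),
      (∀ v, IsDiffOp A l ⇑(Φ v)) →
      ∀ v : Fin k → A,
        Sfun 𝕜 A (a • b • Φ) hab v - a • Sfun 𝕜 A (b • Φ) hb v
            - b • Sfun 𝕜 A (a • Φ) ha v + b • a • Sfun 𝕜 A Φ h v = 0) ∧
    -- (3)  S ∘ S = 0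
    (∀ (Φ : (Fin (k + 2) → A) → PlusHom 𝕜 A P) (h : IsSkewMultiDeriv 𝕜 A (k + 2) Φ)
        (h' : IsSkewMultiDeriv 𝕜 A (k + 1) (Sfun 𝕜 A Φ h)),
      Sfun 𝕜 A (Sfun 𝕜 A Φ h) h' = 0) := by
  refine ⟨?_, ?_, ?_, ?_, ?_⟩
  · -- (1)
    intro Φ h hΦ
    constructor
    · intro v
      have hco : ⇑(Sfun 𝕜 A Φ h v) = fun b => Φ (Fin.snoc v b) 1 := rfl
      rw [hco]
      refine key_lemma (A := A) l (fun b => ⇑(Φ (Fin.snoc v b)))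
        (fun b c x => ?_) (fun b => hΦ (Fin.snoc v b))
      show Φ (Fin.snoc v (b * c)) x = Φ (Fin.snoc v c) (b * x) + Φ (Fin.snoc v b) (c * x)
      rw [snoc_mul h v b c]
      rfl
    · refine ⟨?_, ?_, ?_, ?_⟩
      · intro v i x y
        refine PlusHom.ext fun b => ?_
        rw [PlusHom.add_apply, Sfun_apply, Sfun_apply, Sfun_apply,
          Fin.snoc_update, Fin.snoc_update, Fin.snoc_update,
          h.1 (Fin.snoc v b) i.castSucc x y, PlusHom.add_apply]
      · intro v i c x
        refine PlusHom.ext fun b => ?_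
        rw [PlusHom.ksmul_apply, Sfun_apply, Sfun_apply,
          Fin.snoc_update, Fin.snoc_update,
          h.2.1 (Fin.snoc v b) i.castSucc c x, PlusHom.ksmul_apply]
      · intro v i j hij hv
        refine PlusHom.ext fun b => ?_
        rw [Sfun_apply,
          h.2.2.1 (Fin.snoc v b) i.castSucc j.castSucc
            (fun e => hij (Fin.castSucc_injective _ e))
            (by rw [Fin.snoc_castSucc, Fin.snoc_castSucc]; exact hv)]
        rfl
      · intro v i x y
        refine PlusHom.ext fun b => ?_
        simp only [PlusHom.add_apply, PlusHom.smul_apply, Sfun_apply]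
        rw [Fin.snoc_update, h.2.2.2 (Fin.snoc v b) i.castSucc x y,
          snoc_mul h (Function.update v i y) x b, snoc_mul h (Function.update v i x) y b]
        simp only [PlusHom.add_apply, PlusHom.smul_apply, mul_one, ← Fin.snoc_update]
        have h0' : Φ (Fin.snoc (Function.update v i y) x) b
            + Φ (Fin.snoc (Function.update v i x) y) b = 0 := by
          rw [← PlusHom.add_apply, snoc_antisymm h v i x y]; rfl
        rw [add_add_add_comm, h0', add_zero]
  · -- (2): stability under the A-action, skew part
    intro a Φ h
    obtain ⟨h1, h2, h3, h4⟩ := h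
    refine ⟨?_, ?_, ?_, ?_⟩
    · intro v i x y
      show a • Φ (Function.update v i (x + y))
          = a • Φ (Function.update v i x) + a • Φ (Function.update v i y)
      rw [h1 v i x y, smul_add]
    · intro v i c x
      show a • Φ (Function.update v i (c • x)) = c • (a • Φ (Function.update v i x))
      rw [h2 v i c x]
      exact PlusHom.ext fun b => rfl
    · intro v i j hij hv
      show a • Φ v = 0
      rw [h3 v i j hij hv, smul_zero]
    · intro v i x y
      show a • Φ (Function.update v i (x * y))
          = x • (a • Φ (Function.update v i y)) + y • (a • Φ (Function.update v i x))
      rw [h4 v i x y, smul_add, smul_smul, smul_smul, smul_smul, smul_smul,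
        mul_comm a x, mul_comm a y]
  · -- (2): stability under the A-action, diff-op part
    intro a Φ hΦ v
    have hco : ⇑((a • Φ) v) = fun b => Φ v (a * b) := rfl
    rw [hco]
    exact isDiffOp_mulLeft (hΦ v) a
  · -- (2): δ_b(δ_a(S)) = 0
    intro a b Φ h ha hb hab hΦ v
    refine PlusHom.ext fun c => ?_
    simp only [PlusHom.sub_apply, PlusHom.add_apply, PlusHom.smul_apply,
      PlusHom.zero_apply, Sfun_apply, Pi.smul_apply, mul_one]
    rw [snoc_mul h v a c, snoc_mul h v b c, snoc_mul h v a (b * c), snoc_mul h v b c]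
    simp only [PlusHom.add_apply, PlusHom.smul_apply, mul_one]
    rw [mul_comm a b, mul_comm c b]
    abel
  · -- (3): S ∘ S = 0
    intro Φ h h'
    funext v
    refine PlusHom.ext fun c => ?_
    show Φ (Fin.snoc (Fin.snoc v c) 1) 1 = _
    rw [snoc_one h (Fin.snoc v c)]
    rfl
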